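/- Let V ⊆ ℝ² be open, let g : V → (2×2 real matrices) be a smooth field of symmetric positive-definite matrices, and let W : V → (2×2 real matrices) be smooth. Set H := (1/2)·tr(W), K := det(W), J(s,q) := det(I − q·W(s)) = 1 − 2H(s)q + K(s)q², and on the open set Ω := { (s,q) ∈ V × ℝ : J(s,q) > 0 } define the 3×3 metric G(s,q) whose tangential block is G^{∥}(s,q) := (I − qW(s))ᵀ g(s) (I − qW(s)), whose normal–tangential components vanish, and whose normal component is 1. Let Δ_G F := (det g · J²)^{-1/2}[ ∑_{α,β=1}^{2} ∂_{s^α}( (det g · J²)^{1/2} (G^{∥})^{-1}_{αβ} ∂_{s^β} F ) + ∂_q( (det g · J²)^{1/2} ∂_q F ) ] and Δ_g ψ := (det g)^{-1/2} ∑_{α,β=1}^{2} ∂_{s^α}( (det g)^{1/2} (g^{-1})_{αβ} ∂_{s^β} ψ ). Then for every smooth ψ : V → ℂ and every s ∈ V: J^{1/2}·Δ_G( J^{-1/2}·(ψ ∘ pr) ) evaluated at (s, 0) equals Δ_g ψ(s) + ( H(s)² − K(s) )·ψ(s), where pr(s,q) = s. Consequently the submanifold Schrödinger operator of a surface S ⊂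 𝔼³ is −Δ_{S↪𝔼³} = −Δ_S − (H² − K). -/

import Mathlib

open Matrix
open scoped BigOperators

/-- Partial derivative `∂_{s^α}` on the tube `(Fin 2 → ℝ) × ℝ`. -/
noncomputable def dS (α : Fin 2) (F : (Fin 2 → ℝ) × ℝ → ℂ) (p : (Fin 2 → ℝ) × ℝ) : ℂ :=
  fderiv ℝ (fun s => F (s, p.2)) p.1 (Pi.single α 1)

/-- Partial derivative `∂_q` in the normal coordinate on the tube. -/
noncomputable def dQ (F : (Fin 2 → ℝ) × ℝ → ℂ) (p : (Fin 2 → ℝ) × ℝ) : ℂ :=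
  deriv (fun q => F (p.1, q)) p.2

/-- Partial derivative `∂_α` on the surface coordinates. -/
noncomputable def pd (α : Fin 2) (f : (Fin 2 → ℝ) → ℂ) (s : Fin 2 → ℝ) : ℂ :=
  fderiv ℝ f s (Pi.single α 1)

/-- Mean curvature `H = (1/2)·tr W`. -/
noncomputable def meanCurv (W : (Fin 2 → ℝ) → Matrix (Fin 2) (Fin 2) ℝ)
    (s : Fin 2 → ℝ) : ℝ := (1 / 2) * (W s).trace

/-- Gauss curvature `K = det W`. -/
noncomputable def gaussCurv (W : (Fin 2 → ℝ) → Matrix (Fin 2) (Fin 2) ℝ)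
    (s : Fin 2 → ℝ) : ℝ := (W s).det

/-- `J(s,q) = det(I − qW) = 1 − 2Hq + Kq²`. -/
noncomputable def Jfac (W : (Fin 2 → ℝ) → Matrix (Fin 2) (Fin 2) ℝ)
    (p : (Fin 2 → ℝ) × ℝ) : ℝ :=
  1 - 2 * meanCurv W p.1 * p.2 + gaussCurv W p.1 * p.2 ^ 2

/-- Tangential block of the tube metric: `G^∥ = (I − qW)ᵀ g (I − qW)`. -/
noncomputable def Gpar (g W : (Fin 2 → ℝ) → Matrix (Fin 2) (Fin 2) ℝ)
    (p : (Fin 2 → ℝ) × ℝ) : Matrix (Fin 2) (Fin 2) ℝ :=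
  (1 - p.2 • W p.1)ᵀ * g p.1 * (1 - p.2 • W p.1)

/-- Determinant of the tube metric: `det g · J²`. -/
noncomputable def detT (g W : (Fin 2 → ℝ) → Matrix (Fin 2) (Fin 2) ℝ)
    (p : (Fin 2 → ℝ) × ℝ) : ℝ :=
  (g p.1).det * (Jfac W p) ^ 2

/-- Beltrami–Laplace operator of the tube metric (tangential block `G^∥`,
vanishing normal–tangential components, normal component `1`):
`Δ_G F = (det g·J²)^{-1/2} [ ∑_{α,β} ∂_{s^α}((det g·J²)^{1/2} (G^∥)⁻¹_{αβ} ∂_{s^β} F)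
  + ∂_q((det g·J²)^{1/2} ∂_q F) ]`. -/
noncomputable def deltaTube (g W : (Fin 2 → ℝ) → Matrix (Fin 2) (Fin 2) ℝ)
    (F : (Fin 2 → ℝ) × ℝ → ℂ) (p : (Fin 2 → ℝ) × ℝ) : ℂ :=
  ((detT g W p ^ (-(1 : ℝ) / 2) : ℝ) : ℂ) *
    ((∑ α, ∑ β, dS α (fun p' =>
        ((detT g W p' ^ ((1 : ℝ) / 2) * (Gpar g W p')⁻¹ α β : ℝ) : ℂ)
          * dS β F p') p)
      + dQ (fun p' => ((detT g W p' ^ ((1 : ℝ) / 2) : ℝ) : ℂ) * dQ F p') p)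

/-- Beltrami–Laplace operator of the surface metric `g`:
`Δ_g ψ = (det g)^{-1/2} ∑_{α,β} ∂_α((det g)^{1/2} (g⁻¹)_{αβ} ∂_β ψ)`. -/
noncomputable def deltaSurf (g : (Fin 2 → ℝ) → Matrix (Fin 2) (Fin 2) ℝ)
    (ψ : (Fin 2 → ℝ) → ℂ) (s : Fin 2 → ℝ) : ℂ :=
  (((g s).det ^ (-(1 : ℝ) / 2) : ℝ) : ℂ) *
    ∑ α, ∑ β, pd α (fun s' =>
      (((g s').det ^ ((1 : ℝ) / 2) * (g s')⁻¹ α β : ℝ) : ℂ) * pd β ψ s') s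

/- STATEMENT 18 (Theorem 4.4(2)): for a surface S ⊂ 𝔼³ with first fundamental
form g, shape operator W, mean curvature H and Gauss curvature K, the conjugated
tube Laplacian restricted to the surface gives the submanifold Schrödinger
operator: J^{1/2}·Δ_G(J^{-1/2}·ψ∘pr) |_{q=0} = Δ_g ψ + (H² − K)ψ, i.e.
−Δ_{S↪𝔼³} = −Δ_S − (H² − K). -/
theorem surface_submanifold_schroedinger (V : Set (Fin 2 → ℝ)) (hV : IsOpen V)
    (g W : (Fin 2 → ℝ) → Matrix (Fin 2) (Fin 2) ℝ)
    (hg : ∀ i j, ContDiffOn ℝ (⊤ : ℕ∞) (fun s => g s i j) V)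
    (hgsym : ∀ s ∈ V, (g s).IsSymm)
    (hgpos : ∀ s ∈ V, (g s).PosDef)
    (hW : ∀ i j, ContDiffOn ℝ (⊤ : ℕ∞) (fun s => W s i j) V)
    (ψ : (Fin 2 → ℝ) → ℂ) (hψ : ContDiffOn ℝ (⊤ : ℕ∞) ψ V)
    (s : Fin 2 → ℝ) (hs : s ∈ V) :
    ((Jfac W (s, 0) ^ ((1 : ℝ) / 2) : ℝ) : ℂ) *
        deltaTube g W
          (fun p => ((Jfac W p ^ (-(1 : ℝ) / 2) : ℝ) : ℂ) * ψ p.1) (s, 0)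
      = deltaSurf g ψ s
        + (((meanCurv W s) ^ 2 - gaussCurv W s : ℝ) : ℂ) * ψ s := by
  classical
  set F : (Fin 2 → ℝ) × ℝ → ℂ :=
    fun p => ((Jfac W p ^ (-(1 : ℝ) / 2) : ℝ) : ℂ) * ψ p.1 with hFdef
  set H : ℝ := meanCurv W s with hHdef
  set K : ℝ := gaussCurv W s with hKdef
  set d : ℝ := (g s).det with hddef
  have hd : 0 < d := (hgpos s hs).det_pos
  -- J at q = 0 is 1
  have hJ0 : ∀ s' : Fin 2 → ℝ, Jfac W (s', (0 : ℝ)) = 1 := by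
    intro s'; simp [Jfac]
  -- F restricted to q = 0 is ψ
  have hF0 : (fun s' => F (s', (0 : ℝ))) = ψ := by
    funext s'; simp [hFdef, hJ0 s', Real.one_rpow]
  have key : ∀ (f1 : (Fin 2 → ℝ) × ℝ → ℂ) (f2 : (Fin 2 → ℝ) → ℂ),
      (fun s' => f1 (s', (0 : ℝ))) = f2 →
      ∀ (α : Fin 2) (s0 : Fin 2 → ℝ), dS α f1 (s0, (0 : ℝ)) = pd α f2 s0 :=
    fun f1 f2 h α s0 => congrArg (fun f => fderiv ℝ f s0 (Pi.single α 1)) h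
  have hdSF : ∀ (β : Fin 2) (s' : Fin 2 → ℝ), dS β F (s', (0 : ℝ)) = pd β ψ s' :=
    fun β s' => key F ψ hF0 β s'
  -- detT and Gpar at q = 0
  have hdetT0 : ∀ s' : Fin 2 → ℝ, detT g W (s', (0 : ℝ)) = (g s').det := by
    intro s'; simp [detT, hJ0 s']
  have hGpar0 : ∀ s' : Fin 2 → ℝ, Gpar g W (s', (0 : ℝ)) = g s' := by
    intro s'; simp [Gpar]
  -- tangential part
  have htan : ∀ α β : Fin 2,
      dS α (fun p' => ((detT g W p' ^ ((1 : ℝ) / 2) * (Gpar g W p')⁻¹ α β : ℝ) : ℂ)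
          * dS β F p') (s, 0)
        = pd α (fun s' =>
            (((g s').det ^ ((1 : ℝ) / 2) * (g s')⁻¹ α β : ℝ) : ℂ) * pd β ψ s') s := by
    intro α β
    refine key _ _ ?_ α s
    funext s'
    simp only [hdetT0 s', hGpar0 s', hdSF β s']
  -- the polynomial j and its derivative
  set j : ℝ → ℝ := fun q => 1 - 2 * H * q + K * q ^ 2 with hjdef
  have hJfac : ∀ q : ℝ, Jfac W (s, q) = j q := by intro q; rfl
  have hj0 : j 0 = 1 := by simp [hjdef]
  have hjderiv : ∀ q : ℝ, HasDerivAt j (2 * K * q - 2 * H) q := by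
    intro q
    have h1 : HasDerivAt (fun q : ℝ => 2 * H * q) (2 * H) q := by
      simpa using (hasDerivAt_id q).const_mul (2 * H)
    have h2 : HasDerivAt (fun q : ℝ => K * q ^ 2) (K * (2 * q)) q := by
      simpa using (hasDerivAt_pow 2 q).const_mul K
    have := ((hasDerivAt_const q (1 : ℝ)).sub h1).add h2
    exact this.congr_deriv (by ring)
  have hjc : Continuous j := by
    simp only [hjdef]; continuity
  have hevent : ∀ᶠ q in nhds (0 : ℝ), 0 < j q := by
    have : {q : ℝ | 0 < j q} ∈ nhds (0 : ℝ) :=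
      (isOpen_lt continuous_const hjc).mem_nhds (by simp [hj0])
    exact this
  -- inner normal derivative
  have hdQF : ∀ q : ℝ, 0 < j q →
      dQ F (s, q)
        = (((2 * K * q - 2 * H) * (-(1 : ℝ) / 2) * j q ^ (-(1 : ℝ) / 2 - 1) : ℝ) : ℂ)
            * ψ s := by
    intro q hq
    have h1 : HasDerivAt (fun q' => j q' ^ (-(1 : ℝ) / 2))
        ((2 * K * q - 2 * H) * (-(1 : ℝ) / 2) * j q ^ (-(1 : ℝ) / 2 - 1)) q :=
      (hjderiv q).rpow_const (Or.inl hq.ne')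
    have h2 : HasDerivAt (fun q' => ((j q' ^ (-(1 : ℝ) / 2) : ℝ) : ℂ) * ψ s)
        ((((2 * K * q - 2 * H) * (-(1 : ℝ) / 2) * j q ^ (-(1 : ℝ) / 2 - 1) : ℝ) : ℂ)
          * ψ s) q :=
      h1.ofReal_comp.mul_const (ψ s)
    have hfun : (fun q' => F (((s, q) : (Fin 2 → ℝ) × ℝ).1, q'))
        = fun q' => ((j q' ^ (-(1 : ℝ) / 2) : ℝ) : ℂ) * ψ s := by
      funext q'; simp only [hFdef]; rw [hJfac q']
    simp only [dQ]
    rw [hfun]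
    exact h2.deriv
  -- the model function for the outer normal derivative
  set Φ : ℝ → ℂ := fun q =>
    ((d ^ ((1 : ℝ) / 2) * (-(1 : ℝ) / 2) * ((2 * K * q - 2 * H) * j q ^ (-(1 : ℝ) / 2)) : ℝ) : ℂ)
      * ψ s with hΦdef
  have heq : (fun q => ((detT g W (s, q) ^ ((1 : ℝ) / 2) : ℝ) : ℂ) * dQ F (s, q))
      =ᶠ[nhds (0 : ℝ)] Φ := by
    filter_upwards [hevent] with q hq
    rw [hdQF q hq]
    have hdetT : detT g W (s, q) = d * (j q) ^ 2 := by
      simp only [detT]; rw [hJfac q]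
    rw [hdetT]
    have hr : (d * (j q) ^ 2) ^ ((1 : ℝ) / 2) = d ^ ((1 : ℝ) / 2) * j q := by
      rw [Real.mul_rpow hd.le (sq_nonneg _)]
      congr 1
      rw [← Real.rpow_natCast (j q) 2, ← Real.rpow_mul hq.le]
      norm_num
    rw [hr]
    have hpow : j q * j q ^ (-(1 : ℝ) / 2 - 1) = j q ^ (-(1 : ℝ) / 2) := by
      calc j q * j q ^ (-(1 : ℝ) / 2 - 1)
          = j q ^ (1 : ℝ) * j q ^ (-(1 : ℝ) / 2 - 1) := by rw [Real.rpow_one]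
        _ = j q ^ ((1 : ℝ) + (-(1 : ℝ) / 2 - 1)) := (Real.rpow_add hq _ _).symm
        _ = j q ^ (-(1 : ℝ) / 2) := by norm_num
    have hreal : (d ^ ((1 : ℝ) / 2) * j q)
          * ((2 * K * q - 2 * H) * (-(1 : ℝ) / 2) * j q ^ (-(1 : ℝ) / 2 - 1))
        = d ^ ((1 : ℝ) / 2) * (-(1 : ℝ) / 2)
            * ((2 * K * q - 2 * H) * j q ^ (-(1 : ℝ) / 2)) := by
      linear_combination (d ^ ((1 : ℝ) / 2) * (2 * K * q - 2 * H) * (-(1 : ℝ) / 2)) * hpow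
    simp only [hΦdef]
    rw [← mul_assoc, ← Complex.ofReal_mul, hreal]
  -- outer normal derivative
  have houter : dQ (fun p' => ((detT g W p' ^ ((1 : ℝ) / 2) : ℝ) : ℂ) * dQ F p') (s, 0)
      = ((d ^ ((1 : ℝ) / 2) * (H ^ 2 - K) : ℝ) : ℂ) * ψ s := by
    have h1 : HasDerivAt (fun q : ℝ => 2 * K * q - 2 * H) (2 * K) 0 := by
      simpa using ((hasDerivAt_id (0 : ℝ)).const_mul (2 * K)).sub_const (2 * H)
    have h2 : HasDerivAt (fun q => j q ^ (-(1 : ℝ) / 2))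
        ((2 * K * 0 - 2 * H) * (-(1 : ℝ) / 2) * j 0 ^ (-(1 : ℝ) / 2 - 1)) 0 :=
      (hjderiv 0).rpow_const (Or.inl (by rw [hj0]; norm_num))
    have h3 := h1.mul h2
    have h4 := h3.const_mul (d ^ ((1 : ℝ) / 2) * (-(1 : ℝ) / 2))
    have h5 := h4.ofReal_comp.mul_const (ψ s)
    have hval : (d ^ ((1 : ℝ) / 2) * (-(1 : ℝ) / 2)
          * (2 * K * (j 0 ^ (-(1 : ℝ) / 2))
            + (2 * K * 0 - 2 * H)
              * ((2 * K * 0 - 2 * H) * (-(1 : ℝ) / 2) * j 0 ^ (-(1 : ℝ) / 2 - 1))))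
        = d ^ ((1 : ℝ) / 2) * (H ^ 2 - K) := by
      rw [hj0, Real.one_rpow, Real.one_rpow]
      ring
    have h6 : HasDerivAt Φ (((d ^ ((1 : ℝ) / 2) * (H ^ 2 - K) : ℝ) : ℂ) * ψ s) 0 := by
      simp only [hΦdef]
      rw [← hval]
      exact h5
    have hunfold : dQ (fun p' => ((detT g W p' ^ ((1 : ℝ) / 2) : ℝ) : ℂ) * dQ F p') (s, 0)
        = deriv (fun q => ((detT g W (s, q) ^ ((1 : ℝ) / 2) : ℝ) : ℂ) * dQ F (s, q)) 0 := rfl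
    rw [hunfold, heq.deriv_eq]
    exact h6.deriv
  -- assemble
  simp only [deltaTube]
  rw [houter]
  have hsum : (∑ α, ∑ β, dS α (fun p' =>
        ((detT g W p' ^ ((1 : ℝ) / 2) * (Gpar g W p')⁻¹ α β : ℝ) : ℂ)
          * dS β F p') ((s, 0) : (Fin 2 → ℝ) × ℝ))
      = ∑ α, ∑ β, pd α (fun s' =>
          (((g s').det ^ ((1 : ℝ) / 2) * (g s')⁻¹ α β : ℝ) : ℂ) * pd β ψ s') s :=
    Finset.sum_congr rfl fun α _ => Finset.sum_congr rfl fun β _ => htan α β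
  rw [hsum, hJ0 s, hdetT0 s]
  simp only [Real.one_rpow, Complex.ofReal_one, one_mul, deltaSurf]
  rw [← hddef, mul_add]
  congr 1
  rw [← mul_assoc, ← Complex.ofReal_mul]
  have hmul : d ^ (-(1 : ℝ) / 2) * (d ^ ((1 : ℝ) / 2) * (H ^ 2 - K)) = H ^ 2 - K := by
    rw [← mul_assoc, ← Real.rpow_add hd]
    norm_num
  rw [hmul]
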